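/- Let ξ ∈ {1,...,n}, 1 ≤ i ≤ j ≤ n, and let ω_{i,j} := (s_i⋯s_j)(s_1⋯s_{j-1})(s_1⋯s_{j-2})⋯(s_1 s_2)s_1 in the Weyl group of sl_{n+1}. Acting on the ξ-subsets realization of the fundamental representation via the extremal vector construction (applying divided powers of F along the reduced word), the extremal vector J_H^ξ(ω_{i,j}) equals: {1,...,ξ} if j < ξ; {j+2-ξ, j+3-ξ, ..., j+1} if ξ ≤ j and i ≤ j+1-ξ; and {j+1-ξ,...,i-1, i+1,...,j+1} if ξ ≤ j and j+1-ξ < i. -/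

import Mathlib

/-- The list `[a, a+1, …, b]`. -/
def seg (a b : ℕ) : List ℕ := List.range' a (b + 1 - a)

/-- The word `ω_{i,j} = (s_i s_{i+1} ⋯ s_j)(s_1 ⋯ s_{j-1})(s_1 ⋯ s_{j-2}) ⋯ (s_1 s_2) s_1`. -/
def weylWord (i j : ℕ) : List ℕ :=
  seg i j ++ (((List.range (j - 1)).reverse.map (fun m => seg 1 (m + 1))).flatten)

/-- One extremal-vector step in the `ξ`-subset realization of `L_q(Λ_ξ)`: the divided
power `F_i^{(m)}` (with `m = ⟨wt(J), α_i^∨⟩ ∈ {0,1}` along a reduced word) sends the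
subset `J` to `(J∖{i}) ∪ {i+1}` if `i ∈ J` and `i+1 ∉ J`, and fixes `J` otherwise. -/
def stepF (i : ℕ) (J : Finset ℕ) : Finset ℕ :=
  if i ∈ J ∧ i + 1 ∉ J then insert (i + 1) (J.erase i) else J

/-!
`F_x` moves `x` into a hole at `x + 1`. Along a run `s_a ⋯ s_b` (the rightmost letter acts
first) applied to an interval `[c, b]`, the hole above the top travels down letter by letter
until it meets `max a c`. Each block `s_1 ⋯ s_k` of the staircase therefore shifts an interval
ending at `k` up by one, so the staircase `(s_1 ⋯ s_{j-1}) ⋯ s_1` carries `[1, ξ]` to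
`[j + 1 - ξ, j]` once `ξ ≤ j`, and the leading run `s_i ⋯ s_j` then leaves the hole at
`max i (j + 1 - ξ)`.
-/

open Finset

lemma mem_seg {x a b : ℕ} : x ∈ seg a b ↔ a ≤ x ∧ x ≤ b := by
  rw [seg, List.mem_range'_1]
  omega

lemma stepF_of_notMem {x : ℕ} {J : Finset ℕ} (h : x ∉ J) : stepF x J = J :=
  if_neg fun h' => h h'.1

lemma stepF_erase_succ {x : ℕ} {J : Finset ℕ} (hx : x ∈ J) (hx' : x + 1 ∈ J) :
    stepF x (J.erase (x + 1)) = J.erase x := by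
  rw [stepF, if_pos ⟨mem_erase.2 ⟨by omega, hx⟩, notMem_erase _ _⟩, erase_right_comm,
    insert_erase (mem_erase.2 ⟨by omega, hx'⟩)]

lemma stepF_Icc_of_ne {x a b : ℕ} (h : x ≠ b) : stepF x (Icc a b) = Icc a b := by
  rw [stepF, if_neg]
  simp only [mem_Icc]
  omega

lemma foldr_stepF_Icc_of_ne {l : List ℕ} {a b : ℕ} (h : ∀ x ∈ l, x ≠ b) :
    l.foldr stepF (Icc a b) = Icc a b := by
  induction l with
  | nil => rfl
  | cons x l ih =>
    rw [List.foldr_cons, ih fun y hy => h y (List.mem_cons_of_mem _ hy),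
      stepF_Icc_of_ne (h x List.mem_cons_self)]

lemma foldr_range'_stepF_Icc_erase {a n c d : ℕ} (hc : c ≤ a + n) (hd : a + n ≤ d) :
    (List.range' a n).foldr stepF ((Icc c d).erase (a + n)) = (Icc c d).erase (max a c) := by
  induction n generalizing a with
  | zero => simp [max_eq_left (by simpa using hc)]
  | succ n ih =>
    rw [List.range'_succ, List.foldr_cons, ← add_assoc, add_right_comm, ih (by omega) (by omega)]
    rcases le_or_gt c a with hca | hac
    · rw [max_eq_left (by omega), max_eq_left hca]
      exact stepF_erase_succ (mem_Icc.2 ⟨hca, by omega⟩) (mem_Icc.2 ⟨by omega, by omega⟩)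
    · rw [max_eq_right (by omega), max_eq_right hac.le]
      exact stepF_of_notMem fun h => by simp only [mem_erase, mem_Icc] at h; omega

lemma foldr_seg_stepF_Icc {a b c : ℕ} (ha : a ≤ b + 1) (hc : c ≤ b + 1) :
    (seg a b).foldr stepF (Icc c b) = (Icc c (b + 1)).erase (max a c) := by
  have hsweep := foldr_range'_stepF_Icc_erase (n := b + 1 - a) (d := b + 1)
    (by omega : c ≤ a + (b + 1 - a)) (by omega)
  rwa [Nat.add_sub_cancel' ha, Icc_erase_right, Ico_add_one_right_eq_Icc] at hsweep

lemma Icc_erase_left_eq {a b : ℕ} : (Icc a b).erase a = Icc (a + 1) b := by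
  rw [Icc_erase_left, Icc_add_one_left_eq_Ioc]

/-- The staircase `(s_1 ⋯ s_{j-1})(s_1 ⋯ s_{j-2}) ⋯ (s_1 s_2) s_1`. -/
def staircaseWord (j : ℕ) : List ℕ :=
  ((List.range (j - 1)).reverse.map fun m => seg 1 (m + 1)).flatten

lemma weylWord_eq (i j : ℕ) : weylWord i j = seg i j ++ staircaseWord j := rfl

lemma staircaseWord_succ (j : ℕ) : staircaseWord (j + 1) = seg 1 j ++ staircaseWord j := by
  cases j with
  | zero => rfl
  | succ k => simp [staircaseWord, List.range_succ]

lemma lt_of_mem_staircaseWord {x j : ℕ} (h : x ∈ staircaseWord j) : x < j := by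
  simp only [staircaseWord, List.mem_flatten, List.mem_map, List.mem_reverse,
    List.mem_range] at h
  obtain ⟨_, ⟨m, hm, rfl⟩, hx⟩ := h
  have := mem_seg.1 hx
  omega

lemma foldr_staircaseWord_of_le {ξ j : ℕ} (h : j ≤ ξ) :
    (staircaseWord j).foldr stepF (Icc 1 ξ) = Icc 1 ξ :=
  foldr_stepF_Icc_of_ne fun _ hx => (lt_of_lt_of_le (lt_of_mem_staircaseWord hx) h).ne

lemma foldr_staircaseWord_of_ge {ξ j : ℕ} (h : ξ ≤ j) :
    (staircaseWord j).foldr stepF (Icc 1 ξ) = Icc (j + 1 - ξ) j := by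
  induction j, h using Nat.le_induction with
  | base => rw [foldr_staircaseWord_of_le le_rfl, Nat.add_sub_cancel_left]
  | succ j hξj ih =>
    rw [staircaseWord_succ, List.foldr_append, ih, foldr_seg_stepF_Icc (by omega) (by omega),
      max_eq_right (by omega), Icc_erase_left_eq]
    congr 1
    omega

theorem stmt11_general (ξ i j : ℕ) (hij : i ≤ j) :
    (weylWord i j).foldr stepF (Finset.Icc 1 ξ) =
      if j < ξ then Finset.Icc 1 ξ
      else if i ≤ j + 1 - ξ then Finset.Icc (j + 2 - ξ) (j + 1)
      else (Finset.Icc (j + 1 - ξ) (j + 1)).erase i := by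
  rw [weylWord_eq, List.foldr_append]
  split_ifs with hjξ hi
  · rw [foldr_staircaseWord_of_le hjξ.le]
    exact foldr_stepF_Icc_of_ne fun x hx => by have := mem_seg.1 hx; omega
  all_goals
    rw [foldr_staircaseWord_of_ge (not_lt.1 hjξ), foldr_seg_stepF_Icc (by omega) (by omega)]
  · rw [max_eq_right hi, Icc_erase_left_eq]
    congr 1
    omega
  · rw [max_eq_left (by omega)]

/-- The extremal vector `J_H^ξ(ω_{i,j})` of the fundamental representation `L_q(Λ_ξ)`,
obtained from the highest weight vector `J_H^ξ = {1,…,ξ}` by applying the (divided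
powers of the) operators `F` along the reduced word `ω_{i,j}`, equals `{1,…,ξ}` if
`j < ξ`; `{j+2-ξ, …, j+1}` if `ξ ≤ j` and `i ≤ j+1-ξ`; and
`{j+1-ξ,…,i-1,i+1,…,j+1}` if `ξ ≤ j` and `j+1-ξ < i`. -/
theorem stmt11 (n ξ i j : ℕ) (hξ1 : 1 ≤ ξ) (hξn : ξ ≤ n)
    (hi : 1 ≤ i) (hij : i ≤ j) (hj : j ≤ n) :
    (weylWord i j).foldr stepF (Finset.Icc 1 ξ) =
      if j < ξ then Finset.Icc 1 ξ
      else if i ≤ j + 1 - ξ then Finset.Icc (j + 2 - ξ) (j + 1)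
      else (Finset.Icc (j + 1 - ξ) (j + 1)).erase i :=
  stmt11_general ξ i j hij
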